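/- In the base-station protocol with agent states {initial, red, blue} and rules as above (base station in {b_red, b_blue}, started in an arbitrary base-station state, all agents started in initial): in every reachable configuration, |#red − #blue| ≤ 1. Moreover, if a reachable configuration has #initial = 0, then no agent changes its state in any subsequent configuration. -/

import Mathlib

/-- Agent states. -/
inductive Ag : Type
  | initial | red | blue
deriving DecidableEq

/-- Base-station states. -/
inductive Bs : Type
  | bred | bblue
deriving DecidableEq

/-- Agent–agent transition rules (swaps with an initial-state agent; null otherwise). -/
def dAg : Ag → Ag → Ag × Ag
  | .blue, .initial => (.initial, .blue)
  | .initial, .blue => (.blue, .initial)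
  | .red, .initial  => (.initial, .red)
  | .initial, .red  => (.red, .initial)
  | p, q            => (p, q)

/-- Base-station–agent transition rules. -/
def dBs : Bs → Ag → Bs × Ag
  | .bred, .initial  => (.bblue, .red)
  | .bblue, .initial => (.bred, .blue)
  | s, a             => (s, a)

/-- A configuration: base-station state together with the agents' states. -/
abbrev Conf (n : ℕ) := Bs × (Fin n → Ag)

/-- One step: either the base station interacts with one agent,
or two distinct agents interact. -/
def Step {n : ℕ} (c c' : Conf n) : Prop :=
  (∃ i : Fin n, c'.1 = (dBs c.1 (c.2 i)).1 ∧
      c'.2 = Function.update c.2 i (dBs c.1 (c.2 i)).2) ∨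
  (c'.1 = c.1 ∧ ∃ i j : Fin n, i ≠ j ∧
      c'.2 = Function.update (Function.update c.2 i (dAg (c.2 i) (c.2 j)).1) j
        (dAg (c.2 i) (c.2 j)).2)

/-- Number of agents in state `s`. -/
def cnt {n : ℕ} (C : Fin n → Ag) (s : Ag) : ℕ :=
  (Finset.univ.filter fun a => C a = s).card

/-
The quantity `#red - #blue - [base station is b_blue]` is invariant: a base-station step
colours one agent and toggles the base station, while agent-agent steps only move colours
around. Starting from no coloured agents it equals `-[s0 = b_blue]`, so `#red - #blue` is a
difference of two values in `{0, 1}`. Once no agent is `initial`, every rule is null, so the agents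
are frozen.
-/

def Ag.charge : Ag → ℤ
  | .initial => 0
  | .red => 1
  | .blue => -1

def Bs.bias : Bs → ℤ
  | .bred => 0
  | .bblue => 1

def totalCharge {n : ℕ} (C : Fin n → Ag) : ℤ :=
  ∑ a, (C a).charge

lemma Ag.charge_eq (x : Ag) :
    x.charge = (if x = .red then 1 else 0) - (if x = .blue then 1 else 0) := by
  cases x <;> rfl

lemma cnt_red_sub_cnt_blue {n : ℕ} (C : Fin n → Ag) :
    (cnt C .red : ℤ) - cnt C .blue = totalCharge C := by
  simp only [cnt, Finset.card_filter, totalCharge, Ag.charge_eq, Finset.sum_sub_distrib]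
  push_cast
  rfl

lemma totalCharge_update {n : ℕ} (C : Fin n → Ag) (i : Fin n) (v : Ag) :
    totalCharge (Function.update C i v) = totalCharge C - (C i).charge + v.charge := by
  have hcomp : (fun a => (Function.update C i v a).charge)
      = Function.update (fun a => (C a).charge) i v.charge := by
    exact Function.comp_update Ag.charge C i v
  rw [totalCharge, hcomp, Finset.sum_update_of_mem (Finset.mem_univ i), totalCharge,
    ← Finset.add_sum_erase _ _ (Finset.mem_univ i), Finset.sdiff_singleton_eq_erase]
  ring

lemma charge_dBs (s : Bs) (x : Ag) :
    (dBs s x).2.charge - (dBs s x).1.bias = x.charge - s.bias := by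
  cases s <;> cases x <;> rfl

lemma charge_dAg (p q : Ag) :
    (dAg p q).1.charge + (dAg p q).2.charge = p.charge + q.charge := by
  cases p <;> cases q <;> rfl

lemma Step.totalCharge_sub_bias {n : ℕ} {c c' : Conf n} (h : Step c c') :
    totalCharge c'.2 - c'.1.bias = totalCharge c.2 - c.1.bias := by
  rcases h with ⟨i, hbase, hagents⟩ | ⟨hbase, i, j, hij, hagents⟩
  · have := charge_dBs c.1 (c.2 i)
    rw [hbase, hagents, totalCharge_update]
    linarith
  · have := charge_dAg (c.2 i) (c.2 j)
    rw [hbase, hagents, totalCharge_update, totalCharge_update,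
      Function.update_of_ne hij.symm]
    linarith

lemma totalCharge_sub_bias_of_reachable {n : ℕ} {c c' : Conf n}
    (h : Relation.ReflTransGen Step c c') :
    totalCharge c'.2 - c'.1.bias = totalCharge c.2 - c.1.bias := by
  induction h with
  | refl => rfl
  | tail _ hstep ih => rw [hstep.totalCharge_sub_bias, ih]

lemma dBs_of_ne_initial (s : Bs) {x : Ag} (hx : x ≠ .initial) : dBs s x = (s, x) := by
  cases s <;> cases x <;> first | rfl | exact absurd rfl hx

lemma dAg_of_ne_initial {p q : Ag} (hp : p ≠ .initial) (hq : q ≠ .initial) :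
    dAg p q = (p, q) := by
  cases p <;> cases q <;> first | rfl | exact absurd rfl hp | exact absurd rfl hq

lemma Step.agents_eq_of_ne_initial {n : ℕ} {c c' : Conf n} (h : Step c c')
    (hc : ∀ a, c.2 a ≠ .initial) : c'.2 = c.2 := by
  rcases h with ⟨i, -, hagents⟩ | ⟨-, i, j, -, hagents⟩
  · rw [hagents, dBs_of_ne_initial _ (hc i), Function.update_eq_self]
  · rw [hagents, dAg_of_ne_initial (hc i) (hc j), Function.update_eq_self,
      Function.update_eq_self]

lemma agents_eq_of_reachable_of_ne_initial {n : ℕ} {c c' : Conf n}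
    (h : Relation.ReflTransGen Step c c') (hc : ∀ a, c.2 a ≠ .initial) : c'.2 = c.2 := by
  induction h with
  | refl => rfl
  | tail _ hstep ih => rw [hstep.agents_eq_of_ne_initial (ih ▸ hc), ih]

lemma cnt_eq_zero_iff {n : ℕ} (C : Fin n → Ag) (s : Ag) : cnt C s = 0 ↔ ∀ a, C a ≠ s := by
  simp [cnt, Finset.filter_eq_empty_iff]

lemma Bs.bias_mem (s : Bs) : 0 ≤ s.bias ∧ s.bias ≤ 1 := by
  cases s <;> decide

theorem stmt10 (n : ℕ) (s0 : Bs) (c : Conf n)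
    (h : Relation.ReflTransGen Step (s0, fun _ => Ag.initial) c) :
    (cnt c.2 .red ≤ cnt c.2 .blue + 1 ∧ cnt c.2 .blue ≤ cnt c.2 .red + 1) ∧
    (cnt c.2 .initial = 0 →
      ∀ c' : Conf n, Relation.ReflTransGen Step c c' → c'.2 = c.2) := by
  constructor
  · have hinv : totalCharge c.2 - c.1.bias = -s0.bias := by
      simpa [totalCharge, Ag.charge] using totalCharge_sub_bias_of_reachable h
    have hdiff := cnt_red_sub_cnt_blue c.2
    have := c.1.bias_mem
    have := s0.bias_mem
    omega
  · intro h0 c' h'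
    exact agents_eq_of_reachable_of_ne_initial h' ((cnt_eq_zero_iff _ _).1 h0)
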